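/- Let σ be a greedy ordering of E and τ any ordering of E. Then there exist s ≤ n and a sequence of orderings τ_0 = τ, τ_1, …, τ_s = σ such that for each k < s, τ_{k+1} is obtained from τ_k by an exchange move (with respect to σ) and c(τ_{k+1}) ≤ c(τ_k); in particular c(σ) ≤ c(τ). -/

import Mathlib

/-- Effective commonality of position `i` in ordering `σ`:
`W_σ(i) = ∑_{j < i} w(σ i, σ j)`. -/
noncomputable def effComm {E : Type*} {n : ℕ} (w : E → E → ℝ) (σ : Fin n ≃ E)
    (i : Fin n) : ℝ :=
  ∑ j ∈ Finset.Iio i, w (σ i) (σ j)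

/-- Commonality index of ordering `σ`: the maximum effective commonality
over all positions (equal to `0` when `n = 0`). -/
noncomputable def commIdx {E : Type*} {n : ℕ} (w : E → E → ℝ) (σ : Fin n ≃ E) : ℝ :=
  ⨆ i : Fin n, effComm w σ i

/-- `σ` is a greedy ordering: for every position `i` and every element `e` of
the prefix set `S_i = {σ j : j ≤ i}`, we have
`W_σ(i) ≤ ∑_{e' ∈ S_i, e' ≠ e} w(e, e')`. -/
def Greedy {E : Type*} {n : ℕ} [DecidableEq E] (w : E → E → ℝ) (σ : Fin n ≃ E) : Prop :=
  ∀ i : Fin n, ∀ e ∈ (Finset.Iic i).image σ,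
    effComm w σ i ≤ ∑ e' ∈ ((Finset.Iic i).image σ).erase e, w e e'


/-- `τ'` is obtained from `τ` by the exchange move with respect to the target
ordering `σ`: `imax` is the largest position where `σ` and `τ` disagree, `j` is
the position with `τ j = σ imax`, elements at positions `j ≤ i < imax` are
shifted down by one, and `τ j` is moved to position `imax`. -/
def IsExchangeMove {E : Type*} {n : ℕ} (σ τ τ' : Fin n ≃ E) : Prop :=
  ∃ imax j : Fin n,
    σ imax ≠ τ imax ∧ (∀ i : Fin n, imax < i → σ i = τ i) ∧
    τ j = σ imax ∧ j < imax ∧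
    (∀ i : Fin n, i < j → τ' i = τ i) ∧
    (∀ i : Fin n, imax < i → τ' i = τ i) ∧
    (∀ i : Fin n, j ≤ i → ∀ h2 : i < imax,
      τ' i = τ ⟨(i : ℕ) + 1,
        Nat.lt_of_le_of_lt (Nat.succ_le_of_lt (Fin.lt_def.mp h2)) imax.isLt⟩) ∧
    τ' imax = τ j

/-! The exchange move at the last disagreement `imax`, where `τ j = σ imax`, replaces `τ` by
`τ ∘ (j j+1 … imax)`, with the cycle `Fin.cycleIcc j imax`. At a position other than `imax` the new element sat in `τ` at a
position whose predecessors include all its new predecessors, so with nonnegative weights its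
effective commonality does not grow. At `imax` the new ordering agrees with `σ` from `imax` on, so
its effective commonality there is `σ`'s, which greediness bounds by `τ`'s because `σ` and `τ` have
the same prefix set up to `imax`. Each move makes the common suffix of `τ` and `σ` strictly longer,
so at most `n` moves reach `σ`. -/

open Finset

namespace Fin

variable {n : ℕ} {j l k i : Fin n}

lemma val_cycleIcc (hjl : j ≤ l) :
    (cycleIcc j l k : ℕ) = if k < j ∨ l < k then (k : ℕ) else if k = l then (j : ℕ) else k + 1 := by
  have := k.neZero
  rcases lt_or_ge k j with hkj | hjk
  · simp [cycleIcc_of_lt hkj, hkj]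
  rcases lt_trichotomy k l with hkl | rfl | hlk
  · rw [cycleIcc_of_ge_of_lt hjk hkl, val_add_one_of_lt' (by omega)]
    simp [hjk.not_gt, hkl.not_gt, hkl.ne]
  · simp [cycleIcc_of_last hjl, hjk.not_gt]
  · simp [cycleIcc_of_gt hlk, hlk]

lemma cycleIcc_lt_cycleIcc (hjl : j ≤ l) (hki : k < i) (hil : i ≠ l) :
    cycleIcc j l k < cycleIcc j l i := by
  rw [lt_def, val_cycleIcc hjl, val_cycleIcc hjl]
  simp only [lt_def, ← val_inj] at *
  split_ifs <;> omega

end Fin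

lemma exists_last_ne {α β : Type*} [LinearOrder α] [Finite α] {f g : α → β} (h : f ≠ g) :
    ∃ a, f a ≠ g a ∧ ∀ b, a < b → f b = g b := by
  obtain ⟨a, ha, hmax⟩ := (Set.toFinite {a | f a ≠ g a}).exists_maximal (Function.ne_iff.mp h)
  exact ⟨a, ha, fun b hab => by_contra fun hb => (hmax hb hab.le).not_gt hab⟩

section Prefix

variable {α E : Type*} [LinearOrder α] [LocallyFiniteOrderBot α] [DecidableEq E]
  {σ τ : α ≃ E} {i : α}

lemma image_Iic_subset_of_eqOn_Ioi (h : ∀ k, i < k → σ k = τ k) :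
    (Iic i).image σ ⊆ (Iic i).image τ := by
  simp only [subset_iff, mem_image, mem_Iic]
  rintro _ ⟨k, hki, rfl⟩
  refine ⟨τ.symm (σ k), not_lt.mp fun hlt => ?_, τ.apply_symm_apply _⟩
  have hk : τ.symm (σ k) = k := σ.injective (by rw [h _ hlt, τ.apply_symm_apply])
  exact (hk ▸ hlt).not_ge hki

lemma image_Iic_eq_of_eqOn_Ioi (h : ∀ k, i < k → σ k = τ k) :
    (Iic i).image σ = (Iic i).image τ :=
  (image_Iic_subset_of_eqOn_Ioi h).antisymm
    (image_Iic_subset_of_eqOn_Ioi fun k hk => (h k hk).symm)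

end Prefix

section Commonality

variable {E : Type*} {n : ℕ} (w : E → E → ℝ)

lemma effComm_le_commIdx (σ : Fin n ≃ E) (i : Fin n) : effComm w σ i ≤ commIdx w σ :=
  le_ciSup (Set.finite_range _).bddAbove i

lemma effComm_eq_sum_erase [DecidableEq E] (σ : Fin n ≃ E) (i : Fin n) :
    effComm w σ i = ∑ e ∈ ((Iic i).image σ).erase (σ i), w (σ i) e := by
  rw [← image_erase σ.injective, Iic_erase, sum_image σ.injective.injOn]
  rfl

lemma effComm_eq_of_eqOn_Ici {σ τ : Fin n ≃ E} {i : Fin n} (h : ∀ k, i ≤ k → σ k = τ k) :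
    effComm w σ i = effComm w τ i := by
  classical
  rw [effComm_eq_sum_erase, effComm_eq_sum_erase, h i le_rfl,
    image_Iic_eq_of_eqOn_Ioi fun k hk => h k hk.le]

lemma effComm_trans_le_of_lt (hw : ∀ e e', 0 ≤ w e e') (π : Equiv.Perm (Fin n))
    (τ : Fin n ≃ E) {i : Fin n} (hπ : ∀ k < i, π k < π i) :
    effComm w (π.trans τ) i ≤ effComm w τ (π i) :=
  calc effComm w (π.trans τ) i = ∑ m ∈ (Iio i).image π, w (τ (π i)) (τ m) := by
        rw [sum_image π.injective.injOn]; rfl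
    _ ≤ ∑ m ∈ Iio (π i), w (τ (π i)) (τ m) :=
        sum_le_sum_of_subset_of_nonneg
          (image_subset_iff.mpr fun k hk => mem_Iio.mpr (hπ k (mem_Iio.mp hk)))
          fun _ _ _ => hw _ _

variable {w}

lemma Greedy.effComm_le [DecidableEq E] {σ : Fin n ≃ E} (hσ : Greedy w σ) {τ : Fin n ≃ E}
    {i : Fin n} (h : ∀ k, i < k → σ k = τ k) : effComm w σ i ≤ effComm w τ i := by
  have hS := image_Iic_eq_of_eqOn_Ioi h
  rw [effComm_eq_sum_erase w τ, ← hS]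
  exact hσ i (τ i) (hS ▸ mem_image_of_mem τ (mem_Iic.mpr le_rfl))

end Commonality

section Exchange

variable {E : Type*} {n : ℕ}

lemma isExchangeMove_cycleIcc_trans {σ τ : Fin n ≃ E} {imax j : Fin n}
    (hne : σ imax ≠ τ imax) (hagree : ∀ i, imax < i → σ i = τ i)
    (hj : τ j = σ imax) (hjlt : j < imax) :
    IsExchangeMove σ τ ((Fin.cycleIcc j imax).trans τ) := by
  have := imax.neZero
  refine ⟨imax, j, hne, hagree, hj, hjlt, fun i hi => ?_, fun i hi => ?_, fun i hji hi => ?_,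
    congrArg τ (Fin.cycleIcc_of_last hjlt.le)⟩
  · exact congrArg τ (Fin.cycleIcc_of_lt hi)
  · exact congrArg τ (Fin.cycleIcc_of_gt hi)
  · refine congrArg τ (Fin.ext ?_)
    rw [Fin.val_cycleIcc hjlt.le, if_neg (by simp [hji.not_gt, hi.not_gt]), if_neg hi.ne]

variable {w : E → E → ℝ} [DecidableEq E] {σ : Fin n ≃ E}

lemma Greedy.commIdx_cycleIcc_trans_le (hw : ∀ e e', 0 ≤ w e e') (hσ : Greedy w σ)
    {τ : Fin n ≃ E} {j imax : Fin n} (hjl : j ≤ imax)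
    (h : ∀ i, imax ≤ i → σ i = (Fin.cycleIcc j imax).trans τ i) :
    commIdx w ((Fin.cycleIcc j imax).trans τ) ≤ commIdx w τ := by
  have : Nonempty (Fin n) := ⟨imax⟩
  refine ciSup_le fun i => ?_
  rcases eq_or_ne i imax with rfl | hi
  · calc effComm w ((Fin.cycleIcc j i).trans τ) i = effComm w σ i :=
          (effComm_eq_of_eqOn_Ici w h).symm
      _ ≤ effComm w τ i :=
          hσ.effComm_le fun k hk => (h k hk.le).trans (congrArg τ (Fin.cycleIcc_of_gt hk))
      _ ≤ commIdx w τ := effComm_le_commIdx w τ i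
  · exact (effComm_trans_le_of_lt w hw _ τ fun k hk => Fin.cycleIcc_lt_cycleIcc hjl hk hi).trans
      (effComm_le_commIdx w τ _)

lemma Greedy.exists_exchangeMove (hw : ∀ e e', 0 ≤ w e e') (hσ : Greedy w σ)
    {τ : Fin n ≃ E} {imax : Fin n} (hne : σ imax ≠ τ imax)
    (hagree : ∀ i, imax < i → σ i = τ i) :
    ∃ τ', IsExchangeMove σ τ τ' ∧ commIdx w τ' ≤ commIdx w τ ∧ ∀ i, imax ≤ i → σ i = τ' i := by
  set j := τ.symm (σ imax)
  have hj : τ j = σ imax := τ.apply_symm_apply _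
  have hjlt : j < imax := by
    refine lt_of_le_of_ne (not_lt.mp fun hlt => ?_) fun hji => hne (hji ▸ hj).symm
    exact hlt.ne' (σ.injective ((hagree j hlt).trans hj))
  have hτ' : ∀ i, imax ≤ i → σ i = (Fin.cycleIcc j imax).trans τ i := by
    intro i hi
    rcases hi.eq_or_lt with rfl | hlt
    · have := imax.neZero
      rw [Equiv.trans_apply, Fin.cycleIcc_of_last hjlt.le, hj]
    · exact (hagree i hlt).trans (congrArg τ (Fin.cycleIcc_of_gt hlt).symm)
  exact ⟨_, isExchangeMove_cycleIcc_trans hne hagree hj hjlt,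
    hσ.commIdx_cycleIcc_trans_le hw hjlt.le hτ', hτ'⟩

lemma Greedy.exists_exchange_sequence_of_eqOn_ge (hw : ∀ e e', 0 ≤ w e e') (hσ : Greedy w σ)
    (m : ℕ) (τ : Fin n ≃ E) (hτ : ∀ i : Fin n, m ≤ i → σ i = τ i) :
    ∃ s : ℕ, s ≤ m ∧ ∃ c : ℕ → (Fin n ≃ E),
      c 0 = τ ∧ c s = σ ∧
      (∀ k < s, IsExchangeMove σ (c k) (c (k + 1)) ∧
        commIdx w (c (k + 1)) ≤ commIdx w (c k)) ∧
      commIdx w σ ≤ commIdx w τ := by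
  induction m generalizing τ with
  | zero =>
    obtain rfl : σ = τ := Equiv.ext fun i => hτ i (Nat.zero_le _)
    exact ⟨0, le_rfl, fun _ => σ, rfl, rfl, by simp, le_rfl⟩
  | succ m ih =>
    rcases eq_or_ne σ τ with rfl | hστ
    · exact ⟨0, Nat.zero_le _, fun _ => σ, rfl, rfl, by simp, le_rfl⟩
    obtain ⟨imax, hne, hagree⟩ := exists_last_ne (DFunLike.coe_injective.ne hστ)
    have himax : (imax : ℕ) ≤ m := not_lt.mp fun h => hne (hτ imax h)
    obtain ⟨τ', hmove, hle, hτ'⟩ := hσ.exists_exchangeMove hw hne hagree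
    obtain ⟨s, hs, c, hc0, hcs, hsteps, hσc⟩ :=
      ih τ' fun i hi => hτ' i (Fin.le_def.mpr (himax.trans hi))
    refine ⟨s + 1, by omega, fun k => Nat.casesOn k τ c, rfl, hcs, ?_, hσc.trans hle⟩
    rintro (_ | k) hk
    · show IsExchangeMove σ τ (c 0) ∧ commIdx w (c 0) ≤ commIdx w τ
      exact hc0 ▸ ⟨hmove, hle⟩
    · exact hsteps k (by omega)

end Exchange

/-- For a greedy ordering `σ` and any ordering `τ`, there is a sequence of at
most `n` exchange moves transforming `τ` into `σ` without ever increasing the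
commonality index; in particular `c(σ) ≤ c(τ)`. -/
theorem exists_exchange_sequence_to_greedy
    {E : Type*} [DecidableEq E] {n : ℕ} (w : E → E → ℝ)
    (hw : ∀ e e', 0 ≤ w e e')
    (σ : Fin n ≃ E) (hσ : Greedy w σ) (τ : Fin n ≃ E) :
    ∃ s : ℕ, s ≤ n ∧ ∃ c : ℕ → (Fin n ≃ E),
      c 0 = τ ∧ c s = σ ∧
      (∀ k < s, IsExchangeMove σ (c k) (c (k + 1)) ∧
        commIdx w (c (k + 1)) ≤ commIdx w (c k)) ∧
      commIdx w σ ≤ commIdx w τ :=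
  hσ.exists_exchange_sequence_of_eqOn_ge hw n τ fun i hi => absurd i.isLt hi.not_gt
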